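/- Zero modes of the intertwiner on the lattice g = nη: for every integer n ≥ 1, every 0 ≤ j ≤ n−1, and every z ∈ ℂ such that θ₁(2z+2ηr|τ) ≠ 0 for all integers r with |r| ≤ n, one has ∑_{ℓ=0}^{n} (−1)^ℓ α_ℓ^{(n)}(z) · θ₃(z+(n−2ℓ)η|τ/2)^j · θ₄(z+(n−2ℓ)η|τ/2)^{n−1−j} = 0. -/

import Mathlib

/-!
Put `x_l = z + (n - 2l)η` and `v_l = (θ₃(x_l|τ/2), θ₄(x_l|τ/2))`. Splitting the double series of
`θ₃(x)θ₃(y)` by the parity of the summation indices gives the addition formula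
`θ₃(x|τ/2)θ₄(y|τ/2) - θ₄(x|τ/2)θ₃(y|τ/2) = -2 θ₁(x+y|τ) θ₁(x-y|τ)`, i.e. `det(v_l, v_m)` is
`-2 θ₁(x_l+x_m|τ) θ₁(x_l-x_m|τ)`. The elliptic binomial coefficient and the denominator of `α_l`
are exactly the products of these factors over `m ≠ l`, so `(-1)^l α_l^{(n)}(z)` is a constant
multiple of `1 / ∏_{m ≠ l} det(v_l, v_m)`, while `θ₃^j θ₄^{n-1-j}` is a binary form of degree
`n - 1` in `v_l`. The sum is therefore a homogeneous divided difference on `n + 1` nodes of a form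
of degree `n - 1`, which vanishes: splitting off one linear factor by Cramer's rule lowers both
the degree and the number of nodes by one.
-/

noncomputable section

open Complex BigOperators Finset

local notation "π" => (Real.pi : ℂ)

/-- Jacobi theta function θ₁(z|σ). -/
def theta1 (z σ : ℂ) : ℂ :=
  -∑' n : ℤ, Complex.exp (π * I * ((n : ℂ) + 1/2)^2 * σ) *
      Complex.exp (2 * π * I * ((n : ℂ) + 1/2) * (z + 1/2))

/-- Jacobi theta function θ₂(z|σ). -/
def theta2 (z σ : ℂ) : ℂ := theta1 (z + 1/2) σ

/-- Jacobi theta function θ₃(z|σ). -/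
def theta3 (z σ : ℂ) : ℂ :=
  Complex.exp (π * I * σ / 4 + π * I * z) * theta2 (z + σ/2) σ

/-- Jacobi theta function θ₄(z|σ). -/
def theta4 (z σ : ℂ) : ℂ := theta3 (z + 1/2) σ

/-- R(σ) = e^{-πiσ/4} / (i (e^{2πiσ}; e^{2πiσ})_∞). -/
def Rfun (σ : ℂ) : ℂ :=
  Complex.exp (-π * I * σ / 4) /
    (I * ∏' k : ℕ, (1 - Complex.exp (2 * π * I * σ * ((k : ℂ) + 1))))

def cA (τ η : ℂ) : ℂ := Complex.exp (π*I*η) / Rfun τ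

def cB (τ η : ℂ) : ℂ := Complex.exp (π*I*τ/2) / Rfun (2*η)

/-- Elliptic binomial coefficient [n choose l]_{τ,2η}. -/
def ebinom (τ η : ℂ) (n l : ℕ) : ℂ :=
  (∏ j ∈ Finset.range n, theta1 (2*η*((j:ℂ)+1)) τ) /
  ((∏ j ∈ Finset.range l, theta1 (2*η*((j:ℂ)+1)) τ) *
   (∏ j ∈ Finset.range (n-l), theta1 (2*η*((j:ℂ)+1)) τ))

/-- Coefficient α_l^{(n)}(z). -/
def alphaC (τ η : ℂ) (n l : ℕ) (z : ℂ) : ℂ :=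
  (cA τ η)^n * ebinom τ η n l *
    theta1 (2*z + 2*η*((n:ℂ) - 2*l)) τ /
    ∏ j ∈ Finset.range (n+1), theta1 (2*z - 2*η*((l:ℂ) - (j:ℂ))) τ

lemma cexp_eq_neg_cexp {a b : ℂ} (h : a = b + π * I) : cexp a = -cexp b := by
  rw [h, exp_add_pi_mul_I]

lemma theta1_summand_eq (z σ : ℂ) (n : ℤ) :
    cexp (π * I * ((n : ℂ) + 1/2)^2 * σ) * cexp (2 * π * I * ((n : ℂ) + 1/2) * (z + 1/2)) =
      cexp (π * I * σ / 4 + π * I * (z + 1/2)) * jacobiTheta₂_term n (z + 1/2 + σ/2) σ := by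
  rw [jacobiTheta₂_term, ← Complex.exp_add, ← Complex.exp_add]
  ring_nf

lemma theta1_eq_jacobiTheta₂ (z σ : ℂ) :
    theta1 z σ = -(cexp (π * I * σ / 4 + π * I * (z + 1/2)) * jacobiTheta₂ (z + 1/2 + σ/2) σ) := by
  rw [theta1, jacobiTheta₂, ← tsum_mul_left]
  simp_rw [theta1_summand_eq]

lemma hasSum_theta1 {σ : ℂ} (hσ : 0 < σ.im) (z : ℂ) :
    HasSum (fun n : ℤ => cexp (π * I * ((n : ℂ) + 1/2)^2 * σ) *
      cexp (2 * π * I * ((n : ℂ) + 1/2) * (z + 1/2))) (-theta1 z σ) := by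
  rw [theta1, neg_neg]
  simp_rw [theta1_summand_eq]
  exact ((hasSum_jacobiTheta₂_term _ hσ).summable.mul_left _).hasSum

lemma theta1_add_one (z σ : ℂ) : theta1 (z + 1) σ = -theta1 z σ := by
  rw [theta1_eq_jacobiTheta₂, theta1_eq_jacobiTheta₂,
    show z + 1 + 1/2 + σ/2 = (z + 1/2 + σ/2) + 1 by ring, jacobiTheta₂_add_left,
    cexp_eq_neg_cexp (b := π * I * σ / 4 + π * I * (z + 1/2)) (by ring)]
  ring

lemma theta1_neg (z σ : ℂ) : theta1 (-z) σ = -theta1 z σ := by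
  have hθ : jacobiTheta₂ (z + 1/2 + σ/2) σ =
      cexp (-π * I * (2 * z + 1)) * jacobiTheta₂ (-z + 1/2 + σ/2) σ := by
    rw [← jacobiTheta₂_neg_left (-z + 1/2 + σ/2), ← jacobiTheta₂_add_left (-(-z + 1/2 + σ/2)),
      show z + 1/2 + σ/2 = (-(-z + 1/2 + σ/2) + 1) + σ by ring, jacobiTheta₂_add_left']
    ring_nf
  rw [theta1_eq_jacobiTheta₂, theta1_eq_jacobiTheta₂, hθ, ← mul_assoc, ← Complex.exp_add,
    cexp_eq_neg_cexp (a := π * I * σ / 4 + π * I * (-z + 1/2))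
      (b := π * I * σ / 4 + π * I * (z + 1/2) + -π * I * (2 * z + 1)) (by ring)]
  ring

lemma theta3_eq_jacobiTheta₂ (z σ : ℂ) : theta3 z σ = jacobiTheta₂ z σ := by
  have hexp : cexp (π * I * σ / 4 + π * I * z) *
      cexp (π * I * σ / 4 + π * I * (z + σ/2 + 1/2 + 1/2)) * cexp (-π * I * (σ + 2 * z)) = -1 := by
    rw [← Complex.exp_add, ← Complex.exp_add, cexp_eq_neg_cexp (b := 0) (by ring),
      Complex.exp_zero]
  rw [theta3, theta2, theta1_eq_jacobiTheta₂,
    show z + σ/2 + 1/2 + 1/2 + σ/2 = (z + σ) + 1 by ring, jacobiTheta₂_add_left,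
    jacobiTheta₂_add_left']
  linear_combination (-jacobiTheta₂ z σ) * hexp

lemma theta4_eq_jacobiTheta₂ (z σ : ℂ) : theta4 z σ = jacobiTheta₂ (z + 1/2) σ :=
  theta3_eq_jacobiTheta₂ _ _

lemma hasSum_prod_mul {R ι κ : Type*} [NormedRing R] [NormedAlgebra ℝ R] [FiniteDimensional ℝ R]
    {f : ι → R} {g : κ → R} {a b : R} (hf : HasSum f a) (hg : HasSum g b) :
    HasSum (fun p : ι × κ => f p.1 * g p.2) (a * b) :=
  hf.mul hg <| summable_mul_of_summable_norm (summable_norm_iff.mpr hf.summable)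
    (summable_norm_iff.mpr hg.summable)

def parityEquiv : (ℤ × ℤ) ⊕ (ℤ × ℤ) ≃ ℤ × ℤ :=
  Equiv.ofBijective
    (Sum.elim (fun q => (q.1 + q.2, q.1 - q.2)) (fun q => (q.1 + q.2 + 1, q.1 - q.2)))
    (by
      constructor
      · rintro (⟨a, b⟩ | ⟨a, b⟩) (⟨c, d⟩ | ⟨c, d⟩) h <;>
          simp only [Sum.elim_inl, Sum.elim_inr, Prod.mk.injEq, Sum.inl.injEq, Sum.inr.injEq,
            reduceCtorEq] at h ⊢ <;> omega
      · rintro ⟨k, l⟩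
        rcases Int.even_or_odd' (k + l) with ⟨t, ht | ht⟩
        · exact ⟨.inl (t, k - t), by simp only [Sum.elim_inl, Prod.mk.injEq]; omega⟩
        · exact ⟨.inr (t, k - t - 1), by simp only [Sum.elim_inr, Prod.mk.injEq]; omega⟩)

@[simp] lemma parityEquiv_inl (q : ℤ × ℤ) : parityEquiv (.inl q) = (q.1 + q.2, q.1 - q.2) := rfl

@[simp] lemma parityEquiv_inr (q : ℤ × ℤ) : parityEquiv (.inr q) = (q.1 + q.2 + 1, q.1 - q.2) :=
  rfl

/-- Splitting the double series of `θ(x) θ(y)` by the parity of `k + l`, using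
`k² + l² = 2a² + 2b²` resp. `2(a + ½)² + 2(b + ½)²`. -/
theorem jacobiTheta₂_mul_jacobiTheta₂ {σ : ℂ} (hσ : 0 < σ.im) (x y : ℂ) :
    jacobiTheta₂ x σ * jacobiTheta₂ y σ =
      jacobiTheta₂ (x + y) (2 * σ) * jacobiTheta₂ (x - y) (2 * σ) +
        theta1 (x + y - 1/2) (2 * σ) * theta1 (x - y - 1/2) (2 * σ) := by
  have h2σ : 0 < (2 * σ).im := by simpa using hσ
  have hprod := hasSum_prod_mul (hasSum_jacobiTheta₂_term x hσ) (hasSum_jacobiTheta₂_term y hσ)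
  have heven := hasSum_prod_mul (hasSum_jacobiTheta₂_term (x + y) h2σ)
    (hasSum_jacobiTheta₂_term (x - y) h2σ)
  have hodd := hasSum_prod_mul (hasSum_theta1 h2σ (x + y - 1/2)) (hasSum_theta1 h2σ (x - y - 1/2))
  rw [neg_mul_neg] at hodd
  refine hprod.unique (parityEquiv.hasSum_iff.mp (HasSum.sum ?_ ?_))
  · refine heven.congr_fun fun q => ?_
    simp only [Function.comp_apply, parityEquiv_inl, jacobiTheta₂_term, ← Complex.exp_add]
    push_cast
    ring_nf
  · refine hodd.congr_fun fun q => ?_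
    simp only [Function.comp_apply, parityEquiv_inr, jacobiTheta₂_term, ← Complex.exp_add]
    push_cast
    ring_nf

theorem theta3_mul_theta4_sub_theta4_mul_theta3 {τ : ℂ} (hτ : 0 < τ.im) (x y : ℂ) :
    theta3 x (τ/2) * theta4 y (τ/2) - theta4 x (τ/2) * theta3 y (τ/2) =
      -2 * (theta1 (x + y) τ * theta1 (x - y) τ) := by
  have hσ : 0 < (τ/2).im := by simpa using hτ
  have h₁ := jacobiTheta₂_mul_jacobiTheta₂ hσ x (y + 1/2)
  have h₂ := jacobiTheta₂_mul_jacobiTheta₂ hσ (x + 1/2) y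
  have hper : jacobiTheta₂ (x - y - 1/2) τ = jacobiTheta₂ (x - y + 1/2) τ := by
    rw [← jacobiTheta₂_add_left]; ring_nf
  have hanti : theta1 (x - y - 1) τ = -theta1 (x - y) τ := by
    have h := theta1_add_one (x - y - 1) τ
    rw [sub_add_cancel] at h
    rw [h, neg_neg]
  rw [show 2 * (τ/2) = τ by ring] at h₁ h₂
  rw [theta3_eq_jacobiTheta₂, theta3_eq_jacobiTheta₂, theta4_eq_jacobiTheta₂,
    theta4_eq_jacobiTheta₂, h₁, h₂, show x + (y + 1/2) = x + 1/2 + y by ring,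
    show x - (y + 1/2) = x - y - 1/2 by ring, hper, show x - y - 1/2 - 1/2 = x - y - 1 by ring,
    hanti, show x + 1/2 - y = x - y + 1/2 by ring]
  ring_nf

section DividedDifference

variable {K ι : Type*} [Field K] [DecidableEq ι]

def wedge (a b : K × K) : K := a.1 * b.2 - a.2 * b.1

lemma wedge_self (a : K × K) : wedge a a = 0 := by
  rw [wedge, mul_comm, sub_self]

lemma wedge_swap (a b : K × K) : wedge b a = -wedge a b := by
  rw [wedge, wedge]; ring

/-- Cramer's rule. -/
lemma wedge_eq_of_wedge_ne_zero {a b : K × K} (hab : wedge a b ≠ 0) (u w : K × K) :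
    wedge u w = wedge w b / wedge a b * wedge u a - wedge w a / wedge a b * wedge u b := by
  field_simp
  simp only [wedge]
  ring

/-- With `v l = (x l, 1)` this is the divided difference `∑ g(x l) / ∏_{m ≠ l} (x l - x m)`
of `g` at the nodes `x l`, in homogeneous form. -/
def dividedDiff (v : ι → K × K) (s : Finset ι) (g : K × K → K) : K :=
  ∑ l ∈ s, g (v l) / ∏ m ∈ s.erase l, wedge (v l) (v m)

variable (v : ι → K × K)

lemma dividedDiff_one_of_card_eq_two {s : Finset ι} (hs : s.card = 2) :
    dividedDiff v s (fun _ => 1) = 0 := by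
  obtain ⟨a, b, hab, rfl⟩ := card_eq_two.mp hs
  rw [dividedDiff, sum_pair hab, erase_insert (notMem_singleton.mpr hab),
    erase_insert_of_ne hab, erase_singleton, insert_empty_eq,
    prod_singleton, prod_singleton, wedge_swap (v a), div_neg, add_neg_cancel]

lemma dividedDiff_sub (s : Finset ι) (a b : K) (f g : K × K → K) :
    dividedDiff v s (fun u => a * f u - b * g u) =
      a * dividedDiff v s f - b * dividedDiff v s g := by
  simp only [dividedDiff, mul_sum, ← sum_sub_distrib, mul_div_assoc, sub_div]

lemma dividedDiff_wedge_mul {s : Finset ι}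
    (hv : (s : Set ι).Pairwise fun l m => wedge (v l) (v m) ≠ 0) {p : ι} (hp : p ∈ s)
    (g : K × K → K) :
    dividedDiff v s (fun u => wedge u (v p) * g u) = dividedDiff v (s.erase p) g := by
  rw [dividedDiff, ← sum_erase_add s _ hp, wedge_self, zero_mul, zero_div, add_zero]
  refine sum_congr rfl fun l hl => ?_
  obtain ⟨hlp, hls⟩ := mem_erase.mp hl
  rw [← mul_prod_erase (s.erase l) _ (mem_erase.mpr ⟨Ne.symm hlp, hp⟩),
    erase_right_comm, mul_div_mul_left _ _ (hv hls hp hlp)]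

theorem dividedDiff_prod_wedge_eq_zero (W : Multiset (K × K)) {s : Finset ι}
    (hs : s.card = Multiset.card W + 2)
    (hv : (s : Set ι).Pairwise fun l m => wedge (v l) (v m) ≠ 0) :
    dividedDiff v s (fun u => (W.map (wedge u)).prod) = 0 := by
  induction W using Multiset.induction generalizing s with
  | empty => simpa using dividedDiff_one_of_card_eq_two v hs
  | cons w W ih =>
    obtain ⟨i, hi, j, hj, hij⟩ := one_lt_card.mp (by rw [hs]; omega)
    have hcard : ∀ p ∈ s, (s.erase p).card = Multiset.card W + 2 := fun p hp => by
      rw [card_erase_of_mem hp, hs, Multiset.card_cons]; omega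
    have hv' (p : ι) := hv.mono (coe_subset.mpr (erase_subset p s))
    simp_rw [Multiset.map_cons, Multiset.prod_cons,
      wedge_eq_of_wedge_ne_zero (hv hi hj hij) _ w, sub_mul, mul_assoc]
    rw [dividedDiff_sub, dividedDiff_wedge_mul v hv hi, dividedDiff_wedge_mul v hv hj,
      ih (hcard i hi) (hv' i), ih (hcard j hj) (hv' j), mul_zero, mul_zero, sub_zero]

end DividedDifference

theorem sum_theta3_pow_mul_theta4_pow_div_eq_zero {τ : ℂ} (hτ : 0 < τ.im) {ι : Type*}
    [DecidableEq ι] (x : ι → ℂ) {s : Finset ι} {j k : ℕ} (hs : s.card = j + k + 2)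
    (hx : (s : Set ι).Pairwise fun l m => theta1 (x l + x m) τ * theta1 (x l - x m) τ ≠ 0) :
    ∑ l ∈ s, theta3 (x l) (τ/2) ^ j * theta4 (x l) (τ/2) ^ k /
      ∏ m ∈ s.erase l, (theta1 (x l + x m) τ * theta1 (x l - x m) τ) = 0 := by
  set v : ι → ℂ × ℂ := fun l => (theta3 (x l) (τ/2), theta4 (x l) (τ/2))
  have hwedge : ∀ l m, wedge (v l) (v m) = -2 * (theta1 (x l + x m) τ * theta1 (x l - x m) τ) :=
    fun l m => theta3_mul_theta4_sub_theta4_mul_theta3 hτ (x l) (x m)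
  have hv : (s : Set ι).Pairwise fun l m => wedge (v l) (v m) ≠ 0 :=
    hx.mono' fun l m h => by rw [hwedge]; exact mul_ne_zero (by norm_num) h
  set W : Multiset (ℂ × ℂ) := Multiset.replicate j (0, 1) + Multiset.replicate k (-1, 0)
  have hW : ∀ u, (W.map (wedge u)).prod = u.1 ^ j * u.2 ^ k := fun u => by simp [W, wedge]
  have hden : ∀ l ∈ s, ∏ m ∈ s.erase l, wedge (v l) (v m) =
      (-2) ^ (j + k + 1) * ∏ m ∈ s.erase l, (theta1 (x l + x m) τ * theta1 (x l - x m) τ) := by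
    intro l hl
    rw [prod_congr rfl fun m _ => hwedge l m, prod_mul_distrib, prod_const,
      card_erase_of_mem hl, hs]
    rfl
  have hdd := dividedDiff_prod_wedge_eq_zero v W (by simp [W, hs]) hv
  rw [dividedDiff, sum_congr rfl fun l hl => by
    rw [hW, hden l hl, mul_comm ((-2 : ℂ) ^ _), ← div_div, div_eq_inv_mul], ← mul_sum] at hdd
  exact (mul_eq_zero.mp hdd).resolve_left (by simp)

lemma prod_erase_range_sub_of_odd {R : Type*} [CommRing R] (f : R → R) (hf : ∀ r, f (-r) = -f r)
    {n l : ℕ} (hl : l ≤ n) :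
    ∏ m ∈ (range (n+1)).erase l, f ((m : R) - l) =
      (-1) ^ l * (∏ i ∈ range l, f (i + 1)) * ∏ i ∈ range (n - l), f (i + 1) := by
  have hsplit : (range (n+1)).erase l = range l ∪ Ico (l+1) (n+1) := by
    ext m; simp only [mem_erase, mem_range, mem_union, mem_Ico]; omega
  have hlow : ∏ m ∈ range l, f ((m : R) - l) = (-1) ^ l * ∏ i ∈ range l, f (i + 1) := by
    calc ∏ m ∈ range l, f ((m : R) - l)
        = ∏ i ∈ range l, f (((l - 1 - i : ℕ) : R) - l) := (prod_range_reflect _ l).symm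
      _ = ∏ i ∈ range l, (-1) * f (i + 1) := prod_congr rfl fun i hi => by
        rw [mem_range] at hi
        rw [Nat.sub_sub, Nat.cast_sub (by omega),
          show ((l : R) - ((1 + i : ℕ) : R) - l) = -(i + 1) by push_cast; ring, hf, neg_one_mul]
      _ = _ := by rw [prod_mul_distrib, prod_const, card_range]
  rw [hsplit, prod_union (disjoint_left.mpr fun m hm hm' => by
      simp only [mem_range, mem_Ico] at hm hm'; omega),
    hlow, prod_Ico_eq_prod_range, show n + 1 - (l + 1) = n - l by omega]
  congr 2 with i
  push_cast
  ring_nf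

def latticePoint (z η : ℂ) (n l : ℕ) : ℂ := z + ((n:ℂ) - 2*l)*η

lemma latticePoint_add (z η : ℂ) (n l m : ℕ) :
    latticePoint z η n l + latticePoint z η n m = 2*z + 2*η*(((n - l - m : ℤ)) : ℂ) := by
  rw [latticePoint, latticePoint]; push_cast; ring

lemma latticePoint_sub (z η : ℂ) (n l m : ℕ) :
    latticePoint z η n l - latticePoint z η n m = 2*η*(((m - l : ℤ)) : ℂ) := by
  rw [latticePoint, latticePoint]; push_cast; ring

lemma alphaC_denominator_eq (τ η z : ℂ) (n l : ℕ) :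
    ∏ k ∈ range (n+1), theta1 (2*z - 2*η*((l:ℂ) - (k:ℂ))) τ =
      ∏ m ∈ range (n+1), theta1 (latticePoint z η n l + latticePoint z η n m) τ := by
  rw [← prod_range_reflect _ (n+1)]
  refine prod_congr rfl fun k hk => ?_
  rw [latticePoint_add, Nat.add_sub_cancel, Nat.cast_sub (by simp at hk; omega)]
  push_cast
  ring_nf

lemma neg_one_pow_mul_alphaC (τ η z : ℂ) {n l : ℕ} (hl : l ∈ range (n+1))
    (h : theta1 (latticePoint z η n l + latticePoint z η n l) τ ≠ 0) :
    (-1) ^ l * alphaC τ η n l z =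
      cA τ η ^ n * (∏ k ∈ range n, theta1 (2*η*((k:ℂ)+1)) τ) /
        ∏ m ∈ (range (n+1)).erase l, (theta1 (latticePoint z η n l + latticePoint z η n m) τ *
          theta1 (latticePoint z η n l - latticePoint z η n m) τ) := by
  have hsub : ∏ m ∈ (range (n+1)).erase l, theta1 (latticePoint z η n l - latticePoint z η n m) τ =
      (-1) ^ l * (∏ i ∈ range l, theta1 (2*η*((i:ℂ)+1)) τ) *
        ∏ i ∈ range (n - l), theta1 (2*η*((i:ℂ)+1)) τ := by
    rw [← prod_erase_range_sub_of_odd (fun r => theta1 (2*η*r) τ)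
      (fun r => by rw [mul_neg, theta1_neg]) (Nat.lt_succ_iff.mp (mem_range.mp hl))]
    exact prod_congr rfl fun m _ => by rw [latticePoint_sub]; push_cast; rfl
  have hsign : ((-1 : ℂ) ^ l)⁻¹ = (-1) ^ l := by rw [← inv_pow, inv_neg_one]
  rw [alphaC, ebinom, alphaC_denominator_eq, ← mul_prod_erase _ _ hl, prod_mul_distrib, hsub,
    latticePoint_add, mul_comm (theta1 _ τ), ← latticePoint_add, show 2*z + 2*η*((n:ℂ) - 2*l) =
      latticePoint z η n l + latticePoint z η n l by rw [latticePoint]; ring,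
    mul_div_mul_right _ _ h]
  simp only [div_eq_mul_inv, mul_inv, hsign]
  ring

lemma theta1_two_mul_int_ne_zero {τ η : ℂ} {n : ℕ}
    (hP : ∏ k ∈ range n, theta1 (2*η*((k:ℂ)+1)) τ ≠ 0) {r : ℤ} (hr : r ≠ 0)
    (hrn : |r| ≤ n) : theta1 (2*η*r) τ ≠ 0 := by
  have hfac : ∀ k : ℕ, 0 < k → k ≤ n → theta1 (2*η*k) τ ≠ 0 := fun k hk hkn => by
    have := prod_ne_zero_iff.mp hP (k - 1) (mem_range.mpr (by omega))
    rwa [Nat.cast_sub (by omega), Nat.cast_one, sub_add_cancel] at this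
  rw [abs_le] at hrn
  obtain ⟨k, rfl | rfl⟩ := Int.eq_nat_or_neg r
  · exact_mod_cast hfac k (by omega) (by omega)
  · rw [Int.cast_neg, Int.cast_natCast, mul_neg, theta1_neg, neg_ne_zero]
    exact hfac k (by omega) (by omega)

lemma theta1_latticePoint_add_ne_zero {τ η z : ℂ} {n l m : ℕ}
    (hz : ∀ r : ℤ, |r| ≤ (n:ℤ) → theta1 (2*z + 2*η*(r:ℂ)) τ ≠ 0)
    (hl : l ∈ range (n+1)) (hm : m ∈ range (n+1)) :
    theta1 (latticePoint z η n l + latticePoint z η n m) τ ≠ 0 := by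
  rw [mem_range] at hl hm
  rw [latticePoint_add]
  exact hz _ (by rw [abs_le]; omega)

lemma theta1_latticePoint_sub_ne_zero {τ η z : ℂ} {n l m : ℕ}
    (hP : ∏ k ∈ range n, theta1 (2*η*((k:ℂ)+1)) τ ≠ 0)
    (hl : l ∈ range (n+1)) (hm : m ∈ range (n+1)) (hlm : l ≠ m) :
    theta1 (latticePoint z η n l - latticePoint z η n m) τ ≠ 0 := by
  rw [mem_range] at hl hm
  rw [latticePoint_sub]
  exact theta1_two_mul_int_ne_zero hP (by omega) (by rw [abs_le]; omega)

theorem zero_modes_n_eta_general (τ η : ℂ) (hτ : 0 < τ.im)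
    (n : ℕ) (hn : 1 ≤ n) (j : ℕ) (hj : j ≤ n-1)
    (z : ℂ) (hz : ∀ r : ℤ, |r| ≤ (n:ℤ) → theta1 (2*z + 2*η*(r:ℂ)) τ ≠ 0) :
    ∑ l ∈ Finset.range (n+1), (-1:ℂ)^l * alphaC τ η n l z *
      theta3 (z + ((n:ℂ)-2*l)*η) (τ/2)^j *
      theta4 (z + ((n:ℂ)-2*l)*η) (τ/2)^(n-1-j) = 0 := by
  set P := ∏ k ∈ range n, theta1 (2*η*((k:ℂ)+1)) τ with hP_def
  by_cases hP : P = 0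
  · exact sum_eq_zero fun l _ => by simp [alphaC, ebinom, ← hP_def, hP]
  change ∑ l ∈ range (n+1), (-1:ℂ)^l * alphaC τ η n l z * theta3 (latticePoint z η n l) (τ/2)^j *
    theta4 (latticePoint z η n l) (τ/2)^(n-1-j) = 0
  have hsum := sum_theta3_pow_mul_theta4_pow_div_eq_zero hτ (latticePoint z η n)
    (j := j) (k := n - 1 - j) (by simp; omega) fun l hl m hm hlm =>
      mul_ne_zero (theta1_latticePoint_add_ne_zero hz hl hm)
        (theta1_latticePoint_sub_ne_zero hP hl hm hlm)
  rw [← mul_zero (cA τ η ^ n * P), ← hsum, mul_sum]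
  refine sum_congr rfl fun l hl => ?_
  linear_combination
    (theta3 (latticePoint z η n l) (τ/2)^j * theta4 (latticePoint z η n l) (τ/2)^(n-1-j)) *
      neg_one_pow_mul_alphaC τ η z hl (theta1_latticePoint_add_ne_zero hz hl hl)

/-- zero modes of the intertwiner on the lattice g = nη. -/
theorem zero_modes_n_eta (τ η : ℂ) (hτ : 0 < τ.im) (hη : 0 < η.im)
    (n : ℕ) (hn : 1 ≤ n) (j : ℕ) (hj : j ≤ n-1)
    (z : ℂ) (hz : ∀ r : ℤ, |r| ≤ (n:ℤ) → theta1 (2*z + 2*η*(r:ℂ)) τ ≠ 0) :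
    ∑ l ∈ Finset.range (n+1), (-1:ℂ)^l * alphaC τ η n l z *
      theta3 (z + ((n:ℂ)-2*l)*η) (τ/2)^j *
      theta4 (z + ((n:ℂ)-2*l)*η) (τ/2)^(n-1-j) = 0 :=
  zero_modes_n_eta_general τ η hτ n hn j hj z hz
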